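/- For probability measures μ, ν on ℝ^d with finite second moments, neither equal to δ_0, the comparison angle ∠(μ,ν) := arccos((W₂(δ_0,μ)² + W₂(δ_0,ν)² - W₂(μ,ν)²)/(2W₂(δ_0,μ)W₂(δ_0,ν))) satisfies ∠(μ,ν) ≥ θ(μ,ν), where θ(μ,ν) is the smallest principal angle between span(supp(μ)) and span(supp(ν)). -/

import Mathlib

open MeasureTheory Real ENNReal

noncomputable section

abbrev Euc (d : ℕ) := EuclideanSpace ℝ (Fin d)

/-- Topological support of a measure. -/
def msupp {α : Type*} [TopologicalSpace α] [MeasurableSpace α] (μ : Measure α) : Set α :=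
  {x | ∀ U : Set α, IsOpen U → x ∈ U → 0 < μ U}

/-- Couplings of two measures. -/
def Couplings {α : Type*} [MeasurableSpace α] (μ ν : Measure α) : Set (Measure (α × α)) :=
  {σ | σ.map Prod.fst = μ ∧ σ.map Prod.snd = ν}

/-- Squared L²-Wasserstein distance. -/
def W2sq {α : Type*} [MeasurableSpace α] [NormedAddCommGroup α] (μ ν : Measure α) : ℝ≥0∞ :=
  ⨅ σ ∈ Couplings μ ν, ∫⁻ p : α × α, ENNReal.ofReal (‖p.1 - p.2‖ ^ 2) ∂σ

/-!
Write `A = ∫ ‖x‖² dμ`, `B = ∫ ‖y‖² dν` and `c = cos θ`. For `x ∈ supp μ` and `y ∈ supp ν` the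
definition of `θ` gives `⟪x, y⟫ ≤ c ‖x‖ ‖y‖`, hence `‖x - y‖² ≥ ‖x‖² + ‖y‖² - 2c ‖x‖ ‖y‖`.
A coupling is concentrated on `supp μ × supp ν`, so integrating against it and applying
Cauchy–Schwarz to `∫ ‖x‖ ‖y‖` bounds every transport cost, and hence `W₂(μ, ν)²`, from below by
`A + B - 2c √A √B`. This is the Wasserstein cosine inequality, and `arccos` is antitone.
-/

lemma msupp_eq_support {α : Type*} [TopologicalSpace α] [MeasurableSpace α] (μ : Measure α) :
    msupp μ = μ.support := by
  rw [Measure.support_eq_forall_isOpen]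
  ext x
  exact forall_congr' fun U => ⟨fun h hxU hU => h hU hxU, fun h hU hxU => h hxU hU⟩

lemma ae_mem_msupp {α : Type*} [TopologicalSpace α] [HereditarilyLindelofSpace α]
    [MeasurableSpace α] (μ : Measure α) : ∀ᵐ x ∂μ, x ∈ msupp μ :=
  msupp_eq_support μ ▸ Measure.support_mem_ae

namespace Couplings

variable {α : Type*} [MeasurableSpace α] {μ ν : Measure α} {σ : Measure (α × α)}

lemma ae_fst (hσ : σ ∈ Couplings μ ν) {P : α → Prop} (h : ∀ᵐ x ∂μ, P x) :
    ∀ᵐ p ∂σ, P p.1 :=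
  ae_of_ae_map measurable_fst.aemeasurable (hσ.1 ▸ h)

lemma ae_snd (hσ : σ ∈ Couplings μ ν) {P : α → Prop} (h : ∀ᵐ y ∂ν, P y) :
    ∀ᵐ p ∂σ, P p.2 :=
  ae_of_ae_map measurable_snd.aemeasurable (hσ.2 ▸ h)

lemma integrable_fst (hσ : σ ∈ Couplings μ ν) {f : α → ℝ} (hf : Integrable f μ) :
    Integrable (fun p => f p.1) σ :=
  (MeasurePreserving.integrable_comp_of_integrable ⟨measurable_fst, hσ.1⟩ hf :)

lemma integrable_snd (hσ : σ ∈ Couplings μ ν) {f : α → ℝ} (hf : Integrable f ν) :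
    Integrable (fun p => f p.2) σ :=
  (MeasurePreserving.integrable_comp_of_integrable ⟨measurable_snd, hσ.2⟩ hf :)

lemma integral_fst (hσ : σ ∈ Couplings μ ν) {f : α → ℝ} (hf : AEStronglyMeasurable f μ) :
    ∫ p, f p.1 ∂σ = ∫ x, f x ∂μ := by
  rw [← hσ.1] at hf ⊢
  exact (integral_map measurable_fst.aemeasurable hf).symm

lemma integral_snd (hσ : σ ∈ Couplings μ ν) {f : α → ℝ} (hf : AEStronglyMeasurable f ν) :
    ∫ p, f p.2 ∂σ = ∫ y, f y ∂ν := by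
  rw [← hσ.2] at hf ⊢
  exact (integral_map measurable_snd.aemeasurable hf).symm

lemma prod_mem (μ ν : Measure α) [IsProbabilityMeasure μ] [IsProbabilityMeasure ν] :
    μ.prod ν ∈ Couplings μ ν :=
  ⟨by simp [Measure.map_fst_prod], by simp [Measure.map_snd_prod]⟩

end Couplings

lemma integral_mul_le_sqrt_mul_sqrt {α : Type*} [MeasurableSpace α] {μ : Measure α}
    {f g : α → ℝ} (hf₀ : 0 ≤ᵐ[μ] f) (hg₀ : 0 ≤ᵐ[μ] g) (hf : MemLp f 2 μ) (hg : MemLp g 2 μ) :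
    ∫ a, f a * g a ∂μ ≤ √(∫ a, f a ^ 2 ∂μ) * √(∫ a, g a ^ 2 ∂μ) := by
  have := integral_mul_le_Lp_mul_Lq_of_nonneg Real.HolderConjugate.two_two hf₀ hg₀
    (by rwa [ENNReal.ofReal_ofNat]) (by rwa [ENNReal.ofReal_ofNat])
  simpa only [Real.rpow_two, Real.sqrt_eq_rpow] using this

lemma real_inner_le_sSup_mul_norm_mul_norm {E : Type*} [NormedAddCommGroup E]
    [InnerProductSpace ℝ E] {U V : Submodule ℝ E} {x y : E} (hx : x ∈ U) (hy : y ∈ V) :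
    inner ℝ x y ≤ sSup {r : ℝ | ∃ x ∈ U, ∃ y ∈ V, x ≠ 0 ∧ y ≠ 0 ∧
      r = inner ℝ x y / (‖x‖ * ‖y‖)} * (‖x‖ * ‖y‖) := by
  rcases eq_or_ne x 0 with rfl | hx₀
  · simp
  rcases eq_or_ne y 0 with rfl | hy₀
  · simp
  have hbdd : BddAbove {r : ℝ | ∃ x ∈ U, ∃ y ∈ V, x ≠ 0 ∧ y ≠ 0 ∧
      r = inner ℝ x y / (‖x‖ * ‖y‖)} := by
    refine ⟨1, ?_⟩
    rintro r ⟨a, -, b, -, -, -, rfl⟩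
    exact div_le_one_of_le₀ (real_inner_le_norm a b) (by positivity)
  rw [← div_le_iff₀ (by positivity)]
  exact le_csSup hbdd ⟨x, hx, y, hy, hx₀, hy₀, rfl⟩

section NormedAddCommGroup

variable {E : Type*} [NormedAddCommGroup E] [MeasurableSpace E] [OpensMeasurableSpace E]
  [SecondCountableTopology E] {σ : Measure (E × E)}

lemma integrable_norm_mul_norm (h₁ : Integrable (fun p : E × E => ‖p.1‖ ^ 2) σ)
    (h₂ : Integrable (fun p : E × E => ‖p.2‖ ^ 2) σ) :
    Integrable (fun p : E × E => ‖p.1‖ * ‖p.2‖) σ :=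
  (h₁.add h₂).mono' (by fun_prop) (ae_of_all _ fun p => by
    simp only [Pi.add_apply]
    rw [Real.norm_of_nonneg (by positivity)]
    nlinarith [sq_nonneg (‖p.1‖ - ‖p.2‖), norm_nonneg p.1, norm_nonneg p.2])

lemma integrable_norm_sub_sq (h₁ : Integrable (fun p : E × E => ‖p.1‖ ^ 2) σ)
    (h₂ : Integrable (fun p : E × E => ‖p.2‖ ^ 2) σ) :
    Integrable (fun p : E × E => ‖p.1 - p.2‖ ^ 2) σ :=
  ((h₁.add h₂).const_mul 2).mono' (by fun_prop) (ae_of_all _ fun p => by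
    simp only [Pi.add_apply]
    rw [Real.norm_of_nonneg (by positivity)]
    nlinarith [norm_sub_le p.1 p.2, sq_nonneg (‖p.1‖ - ‖p.2‖), norm_nonneg (p.1 - p.2)])

lemma W2sq_ne_top (μ ν : Measure E) [IsProbabilityMeasure μ] [IsProbabilityMeasure ν]
    (hμ : Integrable (fun x => ‖x‖ ^ 2) μ) (hν : Integrable (fun y => ‖y‖ ^ 2) ν) :
    W2sq μ ν ≠ ⊤ :=
  have hprod := Couplings.prod_mem μ ν
  ((iInf₂_le _ hprod).trans_lt (integrable_norm_sub_sq (Couplings.integrable_fst hprod hμ)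
    (Couplings.integrable_snd hprod hν)).lintegral_lt_top).ne

end NormedAddCommGroup

section InnerProductSpace

variable {E : Type*} [NormedAddCommGroup E] [InnerProductSpace ℝ E] [MeasurableSpace E]
  [OpensMeasurableSpace E] [SecondCountableTopology E]

lemma le_integral_norm_sub_sq_of_inner_le {σ : Measure (E × E)} {c : ℝ} (hc : 0 ≤ c)
    (h₁ : Integrable (fun p : E × E => ‖p.1‖ ^ 2) σ)
    (h₂ : Integrable (fun p : E × E => ‖p.2‖ ^ 2) σ)
    (hinner : ∀ᵐ p ∂σ, inner ℝ p.1 p.2 ≤ c * (‖p.1‖ * ‖p.2‖)) :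
    (∫ p, ‖p.1‖ ^ 2 ∂σ) + (∫ p, ‖p.2‖ ^ 2 ∂σ)
        - 2 * c * (√(∫ p, ‖p.1‖ ^ 2 ∂σ) * √(∫ p, ‖p.2‖ ^ 2 ∂σ))
      ≤ ∫ p, ‖p.1 - p.2‖ ^ 2 ∂σ := by
  have hadd : Integrable (fun p : E × E => ‖p.1‖ ^ 2 + ‖p.2‖ ^ 2) σ := h₁.add h₂
  have hmul := (integrable_norm_mul_norm h₁ h₂).const_mul (2 * c)
  have hCS : ∫ p, ‖p.1‖ * ‖p.2‖ ∂σ ≤ √(∫ p, ‖p.1‖ ^ 2 ∂σ) * √(∫ p, ‖p.2‖ ^ 2 ∂σ) :=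
    integral_mul_le_sqrt_mul_sqrt (ae_of_all _ fun _ => norm_nonneg _)
      (ae_of_all _ fun _ => norm_nonneg _) ((memLp_two_iff_integrable_sq (by fun_prop)).2 h₁)
      ((memLp_two_iff_integrable_sq (by fun_prop)).2 h₂)
  calc _ ≤ ∫ p, ‖p.1‖ ^ 2 + ‖p.2‖ ^ 2 - 2 * c * (‖p.1‖ * ‖p.2‖) ∂σ := by
        rw [integral_sub hadd hmul, integral_add h₁ h₂, integral_const_mul]
        gcongr
    _ ≤ _ := by
        refine integral_mono_ae (hadd.sub hmul) (integrable_norm_sub_sq h₁ h₂) ?_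
        filter_upwards [hinner] with p hp
        rw [norm_sub_sq_real]
        linarith

lemma le_toReal_W2sq_of_inner_le (μ ν : Measure E) [IsProbabilityMeasure μ]
    [IsProbabilityMeasure ν] (hμ : Integrable (fun x => ‖x‖ ^ 2) μ)
    (hν : Integrable (fun y => ‖y‖ ^ 2) ν) {c : ℝ} (hc : 0 ≤ c)
    (hsupp : ∀ x ∈ msupp μ, ∀ y ∈ msupp ν, inner ℝ x y ≤ c * (‖x‖ * ‖y‖)) :
    (∫ x, ‖x‖ ^ 2 ∂μ) + (∫ y, ‖y‖ ^ 2 ∂ν) - 2 * c * (√(∫ x, ‖x‖ ^ 2 ∂μ) * √(∫ y, ‖y‖ ^ 2 ∂ν))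
      ≤ (W2sq μ ν).toReal := by
  rw [← ENNReal.ofReal_le_iff_le_toReal (W2sq_ne_top μ ν hμ hν)]
  refine le_iInf₂ fun σ hσ => ?_
  have h₁ := Couplings.integrable_fst hσ hμ
  have h₂ := Couplings.integrable_snd hσ hν
  rw [← ofReal_integral_eq_lintegral_ofReal (integrable_norm_sub_sq h₁ h₂)
    (ae_of_all _ fun _ => by positivity), ← Couplings.integral_fst hσ (by fun_prop),
    ← Couplings.integral_snd hσ (by fun_prop)]
  refine ENNReal.ofReal_le_ofReal (le_integral_norm_sub_sq_of_inner_le hc h₁ h₂ ?_)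
  filter_upwards [Couplings.ae_fst hσ (ae_mem_msupp μ),
    Couplings.ae_snd hσ (ae_mem_msupp ν)] with p hp₁ hp₂
  exact hsupp _ hp₁ _ hp₂

end InnerProductSpace

lemma le_arccos_div {θ a b : ℝ} (hθ : θ ∈ Set.Icc 0 (π / 2)) (hb : 0 ≤ b)
    (h : a ≤ Real.cos θ * b) : θ ≤ Real.arccos (a / b) := by
  have hcos : 0 ≤ Real.cos θ := Real.cos_nonneg_of_mem_Icc ⟨by linarith [hθ.1, pi_pos], hθ.2⟩
  calc θ = Real.arccos (Real.cos θ) := (Real.arccos_cos hθ.1 (by linarith [hθ.2, pi_pos])).symm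
    -- `div_le_of_le_mul₀` also covers `b = 0`, where `a / b = 0 ≤ cos θ`
    _ ≤ Real.arccos (a / b) := Real.arccos_le_arccos (div_le_of_le_mul₀ hb hcos h)

theorem stmt17_general {d : ℕ} (μ ν : Measure (Euc d)) [IsProbabilityMeasure μ] [IsProbabilityMeasure ν]
    (hμ : Integrable (fun x => ‖x‖ ^ 2) μ) (hν : Integrable (fun y => ‖y‖ ^ 2) ν)
    (θ : ℝ) (hθ : θ ∈ Set.Icc 0 (π / 2))
    (hcos : Real.cos θ = sSup {r : ℝ | ∃ x ∈ Submodule.span ℝ (msupp μ),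
      ∃ y ∈ Submodule.span ℝ (msupp ν), x ≠ 0 ∧ y ≠ 0 ∧ r = inner ℝ x y / (‖x‖ * ‖y‖)}) :
    Real.arccos (((∫ x, ‖x‖ ^ 2 ∂μ) + (∫ y, ‖y‖ ^ 2 ∂ν) - (W2sq μ ν).toReal)
      / (2 * Real.sqrt (∫ x, ‖x‖ ^ 2 ∂μ) * Real.sqrt (∫ y, ‖y‖ ^ 2 ∂ν))) ≥ θ := by
  have hsupp : ∀ x ∈ msupp μ, ∀ y ∈ msupp ν, inner ℝ x y ≤ Real.cos θ * (‖x‖ * ‖y‖) :=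
    fun x hx y hy => hcos ▸ real_inner_le_sSup_mul_norm_mul_norm
      (Submodule.subset_span hx) (Submodule.subset_span hy)
  have hcos₀ : 0 ≤ Real.cos θ := Real.cos_nonneg_of_mem_Icc ⟨by linarith [hθ.1, pi_pos], hθ.2⟩
  have hW := le_toReal_W2sq_of_inner_le μ ν hμ hν hcos₀ hsupp
  exact le_arccos_div hθ (by positivity) (by linarith)

theorem stmt17 {d : ℕ} (μ ν : Measure (Euc d)) [IsProbabilityMeasure μ] [IsProbabilityMeasure ν]
    (hμ : Integrable (fun x => ‖x‖ ^ 2) μ) (hν : Integrable (fun y => ‖y‖ ^ 2) ν)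
    (hμ0 : μ ≠ Measure.dirac 0) (hν0 : ν ≠ Measure.dirac 0)
    (θ : ℝ) (hθ : θ ∈ Set.Icc 0 (π / 2))
    (hcos : Real.cos θ = sSup {r : ℝ | ∃ x ∈ Submodule.span ℝ (msupp μ),
      ∃ y ∈ Submodule.span ℝ (msupp ν), x ≠ 0 ∧ y ≠ 0 ∧ r = inner ℝ x y / (‖x‖ * ‖y‖)}) :
    Real.arccos (((∫ x, ‖x‖ ^ 2 ∂μ) + (∫ y, ‖y‖ ^ 2 ∂ν) - (W2sq μ ν).toReal)
      / (2 * Real.sqrt (∫ x, ‖x‖ ^ 2 ∂μ) * Real.sqrt (∫ y, ‖y‖ ^ 2 ∂ν))) ≥ θ :=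
  stmt17_general μ ν hμ hν θ hθ hcos

end
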